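/- Suppose ε < 1/2 and ε_{n−1} < ε_n for all n ≥ 2. Then for every n ≥ 2 the boundaries satisfy the explicit bounds U_n ≤ nα + Δ_n + 1 and L_n ≥ nα − Δ_n − 1, where Δ_n = √(−n·log(ε_n − ε_{n−1})/2). -/

import Mathlib

open MeasureTheory ProbabilityTheory Filter Asymptotics
open scoped ENNReal

namespace SeqMC

variable {Ω : Type*} [MeasurableSpace Ω]

/-- Partial sums: `S n = X_1 + ⋯ + X_n`, where the i-th variable `X_i` is `X (i-1)`. -/
def S (X : ℕ → Ω → ℕ) (n : ℕ) (ω : Ω) : ℕ := ∑ i ∈ Finset.range n, X i ω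

/-- `X` is an i.i.d. Bernoulli(p) sequence under the probability measure `P`. -/
structure IsBernoulliSeq (P : Measure Ω) (p : ℝ) (X : ℕ → Ω → ℕ) : Prop where
  isProb : IsProbabilityMeasure P
  meas : ∀ i, Measurable (X i)
  bdd : ∀ i ω, X i ω ≤ 1
  indep : iIndepFun X P
  bern : ∀ i, P (X i ⁻¹' {1}) = ENNReal.ofReal p

/-- The walk stayed strictly between the boundaries at all steps `1 ≤ k ≤ n`, i.e. `τ > n`. -/
def notStopped (X : ℕ → Ω → ℕ) (U L : ℕ → ℤ) (n : ℕ) (ω : Ω) : Prop :=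
  ∀ k, 1 ≤ k → k ≤ n → L k < (S X k ω : ℤ) ∧ (S X k ω : ℤ) < U k

/-- The event `τ ≤ n` and `S_τ ≥ U_τ`. -/
def hitUpperBy (X : ℕ → Ω → ℕ) (U L : ℕ → ℤ) (n : ℕ) (ω : Ω) : Prop :=
  ∃ k, 1 ≤ k ∧ k ≤ n ∧ notStopped X U L (k - 1) ω ∧ U k ≤ (S X k ω : ℤ)

/-- The event `τ ≤ n` and `S_τ ≤ L_τ`. -/
def hitLowerBy (X : ℕ → Ω → ℕ) (U L : ℕ → ℤ) (n : ℕ) (ω : Ω) : Prop :=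
  ∃ k, 1 ≤ k ∧ k ≤ n ∧ notStopped X U L (k - 1) ω ∧ (S X k ω : ℤ) ≤ L k

/-- The recursively defined boundaries `(U_n, L_n)`: `U_1 = 2`, `L_1 = -1` and for `n ≥ 2`,
`U_n` is the least `j ∈ {1,2,…}` with `P_α(τ ≥ n, S_n ≥ j) + P_α(τ < n, S_τ ≥ U_τ) ≤ ε_n`,
`L_n` is the greatest `j ∈ ℤ` with `P_α(τ ≥ n, S_n ≤ j) + P_α(τ < n, S_τ ≤ L_τ) ≤ ε_n`.
Here `Pα` is the measure `P_α` and `εs` the spending sequence. -/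
noncomputable def bnd (Pα : Measure Ω) (X : ℕ → Ω → ℕ) (εs : ℕ → ℝ) : ℕ → ℤ × ℤ
  | 0 => (2, -1)
  | 1 => (2, -1)
  | n + 2 =>
      let U : ℕ → ℤ := fun k => if h : k < n + 2 then (bnd Pα X εs k).1 else 0
      let L : ℕ → ℤ := fun k => if h : k < n + 2 then (bnd Pα X εs k).2 else 0
      (sInf {j : ℤ | 1 ≤ j ∧
          Pα {ω | notStopped X U L (n + 1) ω ∧ j ≤ (S X (n + 2) ω : ℤ)} +
            Pα {ω | hitUpperBy X U L (n + 1) ω} ≤ ENNReal.ofReal (εs (n + 2))},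
       sSup {j : ℤ |
          Pα {ω | notStopped X U L (n + 1) ω ∧ (S X (n + 2) ω : ℤ) ≤ j} +
            Pα {ω | hitLowerBy X U L (n + 1) ω} ≤ ENNReal.ofReal (εs (n + 2))})
  termination_by n => n
  decreasing_by all_goals omega

/-- The upper boundary `U_n`. -/
noncomputable def Ub (Pα : Measure Ω) (X : ℕ → Ω → ℕ) (εs : ℕ → ℝ) (n : ℕ) : ℤ :=
  (bnd Pα X εs n).1

/-- The lower boundary `L_n`. -/
noncomputable def Lb (Pα : Measure Ω) (X : ℕ → Ω → ℕ) (εs : ℕ → ℝ) (n : ℕ) : ℤ :=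
  (bnd Pα X εs n).2

/-- The stopping time `τ = inf {k ≥ 1 : S_k ≥ U_k or S_k ≤ L_k}`, with `0` encoding `τ = ∞`. -/
noncomputable def tau (Pα : Measure Ω) (X : ℕ → Ω → ℕ) (εs : ℕ → ℝ) (ω : Ω) : ℕ :=
  sInf {k | 1 ≤ k ∧ ((S X k ω : ℤ) ≤ Lb Pα X εs k ∨ Ub Pα X εs k ≤ (S X k ω : ℤ))}

/-- `τ` as an extended nonneg real (`∞` when the algorithm never stops). -/
noncomputable def tauE (Pα : Measure Ω) (X : ℕ → Ω → ℕ) (εs : ℕ → ℝ) (ω : Ω) : ℝ≥0∞ :=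
  if tau Pα X εs ω = 0 then ⊤ else (tau Pα X εs ω : ℝ≥0∞)

/-- The event `τ < ∞` and `S_τ ≥ U_τ`. -/
def hitsUpper (Pα : Measure Ω) (X : ℕ → Ω → ℕ) (εs : ℕ → ℝ) (ω : Ω) : Prop :=
  tau Pα X εs ω ≠ 0 ∧ Ub Pα X εs (tau Pα X εs ω) ≤ (S X (tau Pα X εs ω) ω : ℤ)

/-- The event `τ < ∞` and `S_τ ≤ L_τ`. -/
def hitsLower (Pα : Measure Ω) (X : ℕ → Ω → ℕ) (εs : ℕ → ℝ) (ω : Ω) : Prop :=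
  tau Pα X εs ω ≠ 0 ∧ (S X (tau Pα X εs ω) ω : ℤ) ≤ Lb Pα X εs (tau Pα X εs ω)

/-- The estimator `p̂ = S_τ/τ` (`= α` if `τ = ∞`). -/
noncomputable def phat (Pα : Measure Ω) (X : ℕ → Ω → ℕ) (εs : ℕ → ℝ) (α : ℝ) (ω : Ω) : ℝ :=
  if tau Pα X εs ω = 0 then α
  else (S X (tau Pα X εs ω) ω : ℝ) / (tau Pα X εs ω)

/-!
By induction on `n`, the recursion keeps `P_α(τ ≤ n, S_τ ≥ U_τ) ≤ ε_n` and
`P_α(τ ≤ n, S_τ ≤ L_τ) ≤ ε_n`; because `ε_n + ε_{n-1} < 1`, the set of levels admissible for `L_n`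
is bounded above, so both extrema are attained. Hence any level `j` with
`P_α(S_n ≥ j) ≤ ε_n - ε_{n-1}` is admissible for `U_n`. Hoeffding's inequality gives
`P_α(S_n ≥ nα + Δ) ≤ exp (-2Δ²/n)`, and `Δ_n` is exactly the radius at which this equals
`ε_n - ε_{n-1}`; so `⌊nα + Δ_n⌋ + 1` is admissible, and symmetrically for `L_n`.
-/

open Real

omit [MeasurableSpace Ω] in
lemma S_le (hX : ∀ i ω, X i ω ≤ 1) (n : ℕ) (ω : Ω) : S X n ω ≤ n := by
  simpa [S] using Finset.sum_le_sum fun i (_ : i ∈ Finset.range n) => hX i ω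

lemma measure_sum_range_ge_le_of_hasSubgaussianMGF_quarter {μ : Measure Ω} [IsFiniteMeasure μ]
    {Y : ℕ → Ω → ℝ} (hindep : iIndepFun Y μ) (hY : ∀ i, HasSubgaussianMGF (Y i) (1 / 4) μ)
    (n : ℕ) {Δ : ℝ} (hΔ : 0 ≤ Δ) :
    μ {ω | Δ ≤ ∑ i ∈ Finset.range n, Y i ω} ≤ ENNReal.ofReal (exp (-(2 * Δ ^ 2) / n)) := by
  rw [← ofReal_measureReal]
  refine ENNReal.ofReal_le_ofReal ((HasSubgaussianMGF.measure_sum_range_ge_le_of_iIndepFun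
    hindep (fun i _ => hY i) hΔ).trans_eq ?_)
  congr 1
  push_cast
  ring

namespace IsBernoulliSeq

variable {μ : Measure Ω} {p : ℝ} {X : ℕ → Ω → ℕ}

lemma integral_eq (hB : IsBernoulliSeq μ p X) (hp : 0 ≤ p) (i : ℕ) :
    μ[fun ω => (X i ω : ℝ)] = p := by
  have hXi : (fun ω => (X i ω : ℝ)) = (X i ⁻¹' {1}).indicator 1 := by
    ext ω
    rcases Nat.le_one_iff_eq_zero_or_eq_one.mp (hB.bdd i ω) with h | h <;> simp [h]
  rw [hXi, integral_indicator_one (hB.meas i (measurableSet_singleton 1)), measureReal_def,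
    hB.bern i, ENNReal.toReal_ofReal hp]

lemma hasSubgaussianMGF (hB : IsBernoulliSeq μ p X) (hp : 0 ≤ p) (i : ℕ) :
    HasSubgaussianMGF (fun ω => (X i ω : ℝ) - p) (1 / 4) μ := by
  have := hB.isProb
  have hIcc : ∀ᵐ ω ∂μ, (X i ω : ℝ) ∈ Set.Icc 0 1 :=
    ae_of_all _ fun ω => ⟨Nat.cast_nonneg _, by exact_mod_cast hB.bdd i ω⟩
  have h := hasSubgaussianMGF_of_mem_Icc (X := fun ω => (X i ω : ℝ))
    (measurable_from_top.comp (hB.meas i)).aemeasurable hIcc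
  rw [hB.integral_eq hp] at h
  convert h using 1
  norm_num

lemma measure_ge_le (hB : IsBernoulliSeq μ p X) (hp : 0 ≤ p) (n : ℕ) {Δ : ℝ} (hΔ : 0 ≤ Δ) :
    μ {ω | n * p + Δ ≤ S X n ω} ≤ ENNReal.ofReal (exp (-(2 * Δ ^ 2) / n)) := by
  have := hB.isProb
  have hset : {ω | n * p + Δ ≤ S X n ω} =
      {ω | Δ ≤ ∑ i ∈ Finset.range n, ((X i ω : ℝ) - p)} := by
    ext ω
    simp only [S, Set.mem_ofPred_eq, Nat.cast_sum, Finset.sum_sub_distrib, Finset.sum_const,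
      Finset.card_range, nsmul_eq_mul]
    constructor <;> intro h <;> linarith
  rw [hset]
  exact measure_sum_range_ge_le_of_hasSubgaussianMGF_quarter
    (hB.indep.comp _ fun _ => measurable_from_top.sub_const p) (hB.hasSubgaussianMGF hp) n hΔ

lemma measure_le_le (hB : IsBernoulliSeq μ p X) (hp : 0 ≤ p) (n : ℕ) {Δ : ℝ} (hΔ : 0 ≤ Δ) :
    μ {ω | S X n ω ≤ n * p - Δ} ≤ ENNReal.ofReal (exp (-(2 * Δ ^ 2) / n)) := by
  have := hB.isProb
  have hset : {ω | S X n ω ≤ n * p - Δ} =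
      {ω | Δ ≤ ∑ i ∈ Finset.range n, -((X i ω : ℝ) - p)} := by
    ext ω
    simp only [S, Set.mem_ofPred_eq, Nat.cast_sum, Finset.sum_neg_distrib, Finset.sum_sub_distrib,
      Finset.sum_const, Finset.card_range, nsmul_eq_mul]
    constructor <;> intro h <;> linarith
  rw [hset]
  exact measure_sum_range_ge_le_of_hasSubgaussianMGF_quarter
    (hB.indep.comp _ fun _ => (measurable_from_top.sub_const p).neg)
    (fun i => (hB.hasSubgaussianMGF hp i).neg) n hΔ

end IsBernoulliSeq

section Events

variable {X : ℕ → Ω → ℕ} {U L U' L' : ℕ → ℤ} {n : ℕ} {ω : Ω}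

omit [MeasurableSpace Ω]

lemma notStopped_congr (hU : ∀ k ≤ n, U k = U' k) (hL : ∀ k ≤ n, L k = L' k) :
    notStopped X U L n = notStopped X U' L' n := by
  funext ω
  exact propext <| forall_congr' fun k => imp_congr_right fun _ =>
    imp_congr_right fun hk => by rw [hU k hk, hL k hk]

lemma hitUpperBy_congr (hU : ∀ k ≤ n, U k = U' k) (hL : ∀ k ≤ n, L k = L' k) :
    hitUpperBy X U L n = hitUpperBy X U' L' n := by
  funext ω
  refine propext <| exists_congr fun k => and_congr_right fun _ => and_congr_right fun hk => ?_
  rw [notStopped_congr (fun j hj => hU j (by omega)) (fun j hj => hL j (by omega)), hU k hk]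

lemma hitLowerBy_congr (hU : ∀ k ≤ n, U k = U' k) (hL : ∀ k ≤ n, L k = L' k) :
    hitLowerBy X U L n = hitLowerBy X U' L' n := by
  funext ω
  refine propext <| exists_congr fun k => and_congr_right fun _ => and_congr_right fun hk => ?_
  rw [notStopped_congr (fun j hj => hU j (by omega)) (fun j hj => hL j (by omega)), hL k hk]

lemma notStopped_or_hitUpperBy_or_hitLowerBy (X : ℕ → Ω → ℕ) (U L : ℕ → ℤ) (n : ℕ) (ω : Ω) :
    notStopped X U L n ω ∨ hitUpperBy X U L n ω ∨ hitLowerBy X U L n ω := by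
  induction n with
  | zero => exact Or.inl fun k h1 h2 => by omega
  | succ n ih =>
    rcases ih with hns | ⟨k, hk1, hkn, hk⟩ | ⟨k, hk1, hkn, hk⟩
    · by_cases hlow : (S X (n + 1) ω : ℤ) ≤ L (n + 1)
      · exact Or.inr (Or.inr ⟨n + 1, by omega, le_rfl, hns, hlow⟩)
      by_cases hup : U (n + 1) ≤ (S X (n + 1) ω : ℤ)
      · exact Or.inr (Or.inl ⟨n + 1, by omega, le_rfl, hns, hup⟩)
      refine Or.inl fun k hk1 hkn => ?_
      rcases Nat.lt_succ_iff_lt_or_eq.mp (Nat.lt_succ_of_le hkn) with hk | rfl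
      · exact hns k hk1 (by omega)
      · exact ⟨by omega, by omega⟩
    · exact Or.inr (Or.inl ⟨k, hk1, by omega, hk⟩)
    · exact Or.inr (Or.inr ⟨k, hk1, by omega, hk⟩)

lemma hitUpperBy_succ_iff :
    hitUpperBy X U L (n + 1) ω ↔
      (notStopped X U L n ω ∧ U (n + 1) ≤ S X (n + 1) ω) ∨ hitUpperBy X U L n ω := by
  refine ⟨fun ⟨k, hk1, hkn, hk⟩ => ?_, ?_⟩
  · rcases Nat.lt_succ_iff_lt_or_eq.mp (Nat.lt_succ_of_le hkn) with hlt | rfl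
    · exact Or.inr ⟨k, hk1, by omega, hk⟩
    · exact Or.inl hk
  · rintro (hk | ⟨k, hk1, hkn, hk⟩)
    · exact ⟨n + 1, by omega, le_rfl, hk⟩
    · exact ⟨k, hk1, by omega, hk⟩

lemma hitLowerBy_succ_iff :
    hitLowerBy X U L (n + 1) ω ↔
      (notStopped X U L n ω ∧ S X (n + 1) ω ≤ L (n + 1)) ∨ hitLowerBy X U L n ω := by
  refine ⟨fun ⟨k, hk1, hkn, hk⟩ => ?_, ?_⟩
  · rcases Nat.lt_succ_iff_lt_or_eq.mp (Nat.lt_succ_of_le hkn) with hlt | rfl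
    · exact Or.inr ⟨k, hk1, by omega, hk⟩
    · exact Or.inl hk
  · rintro (hk | ⟨k, hk1, hkn, hk⟩)
    · exact ⟨n + 1, by omega, le_rfl, hk⟩
    · exact ⟨k, hk1, by omega, hk⟩

end Events

section Admissible

variable (μ : Measure Ω) (X : ℕ → Ω → ℕ) (εs : ℕ → ℝ)

def upperAdmissible (n : ℕ) : Set ℤ :=
  {j : ℤ | 1 ≤ j ∧
    μ {ω | notStopped X (Ub μ X εs) (Lb μ X εs) (n - 1) ω ∧ j ≤ (S X n ω : ℤ)} +
      μ {ω | hitUpperBy X (Ub μ X εs) (Lb μ X εs) (n - 1) ω} ≤ ENNReal.ofReal (εs n)}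

def lowerAdmissible (n : ℕ) : Set ℤ :=
  {j : ℤ |
    μ {ω | notStopped X (Ub μ X εs) (Lb μ X εs) (n - 1) ω ∧ (S X n ω : ℤ) ≤ j} +
      μ {ω | hitLowerBy X (Ub μ X εs) (Lb μ X εs) (n - 1) ω} ≤ ENNReal.ofReal (εs n)}

variable {μ X εs} {n : ℕ}

lemma bnd_eq (hn : 2 ≤ n) :
    bnd μ X εs n = (sInf (upperAdmissible μ X εs n), sSup (lowerAdmissible μ X εs n)) := by
  obtain ⟨m, rfl⟩ : ∃ m, n = m + 2 := ⟨n - 2, by omega⟩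
  rw [bnd]
  have hU : ∀ k ≤ m + 1, (fun k => if h : k < m + 2 then (bnd μ X εs k).1 else 0) k =
      Ub μ X εs k := fun k hk => dif_pos (by omega)
  have hL : ∀ k ≤ m + 1, (fun k => if h : k < m + 2 then (bnd μ X εs k).2 else 0) k =
      Lb μ X εs k := fun k hk => dif_pos (by omega)
  simp only [notStopped_congr hU hL, hitUpperBy_congr hU hL, hitLowerBy_congr hU hL]
  rfl

lemma Ub_eq_sInf (hn : 2 ≤ n) : Ub μ X εs n = sInf (upperAdmissible μ X εs n) := by
  rw [Ub, bnd_eq hn]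

lemma Lb_eq_sSup (hn : 2 ≤ n) : Lb μ X εs n = sSup (lowerAdmissible μ X εs n) := by
  rw [Lb, bnd_eq hn]

lemma Ub_one : Ub μ X εs 1 = 2 := by
  rw [Ub, bnd]

lemma Lb_one : Lb μ X εs 1 = -1 := by
  rw [Lb, bnd]

lemma bddBelow_upperAdmissible : BddBelow (upperAdmissible μ X εs n) :=
  ⟨1, fun _ hj => hj.1⟩

lemma upperAdmissible_nonempty (hX : ∀ i ω, X i ω ≤ 1) (hmono : Monotone εs)
    (hU : μ {ω | hitUpperBy X (Ub μ X εs) (Lb μ X εs) (n - 1) ω} ≤ ENNReal.ofReal (εs (n - 1))) :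
    (upperAdmissible μ X εs n).Nonempty := by
  refine ⟨n + 1, by omega, ?_⟩
  have hempty : {ω | notStopped X (Ub μ X εs) (Lb μ X εs) (n - 1) ω ∧
      (n + 1 : ℤ) ≤ S X n ω} = ∅ :=
    Set.eq_empty_of_forall_notMem fun ω ⟨_, hω⟩ => by have := S_le hX n ω; omega
  rw [hempty, measure_empty, zero_add]
  exact hU.trans (ENNReal.ofReal_le_ofReal (hmono (Nat.sub_le n 1)))

lemma lowerAdmissible_nonempty (hmono : Monotone εs)
    (hL : μ {ω | hitLowerBy X (Ub μ X εs) (Lb μ X εs) (n - 1) ω} ≤ ENNReal.ofReal (εs (n - 1))) :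
    (lowerAdmissible μ X εs n).Nonempty := by
  refine ⟨-1, ?_⟩
  have hempty : {ω | notStopped X (Ub μ X εs) (Lb μ X εs) (n - 1) ω ∧
      (S X n ω : ℤ) ≤ -1} = ∅ :=
    Set.eq_empty_of_forall_notMem fun ω ⟨_, hω⟩ => by omega
  rw [lowerAdmissible, Set.mem_ofPred_eq, hempty, measure_empty, zero_add]
  exact hL.trans (ENNReal.ofReal_le_ofReal (hmono (Nat.sub_le n 1)))

/-- For `j > n ≥ S_n` the condition defining `L_n` charges all of `{τ ≥ n}`; together with the exits
before `n` this covers the whole space, whose mass `1` exceeds `ε_n + ε_{n-1}`. -/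
lemma bddAbove_lowerAdmissible [IsProbabilityMeasure μ] (hX : ∀ i ω, X i ω ≤ 1)
    (hnn : ∀ n, 0 ≤ εs n) (hhalf : ∀ n, εs n < 1 / 2)
    (hU : μ {ω | hitUpperBy X (Ub μ X εs) (Lb μ X εs) (n - 1) ω} ≤ ENNReal.ofReal (εs (n - 1))) :
    BddAbove (lowerAdmissible μ X εs n) := by
  refine ⟨n, fun j hj => ?_⟩
  by_contra! hjn
  set A := {ω | notStopped X (Ub μ X εs) (Lb μ X εs) (n - 1) ω}
  set B := {ω | hitUpperBy X (Ub μ X εs) (Lb μ X εs) (n - 1) ω}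
  set C := {ω | hitLowerBy X (Ub μ X εs) (Lb μ X εs) (n - 1) ω}
  have hA : {ω | notStopped X (Ub μ X εs) (Lb μ X εs) (n - 1) ω ∧ (S X n ω : ℤ) ≤ j} = A :=
    Set.sep_eq_self_iff_mem_true.mpr fun ω _ => by have := S_le hX n ω; omega
  have hj' : μ A + μ C ≤ ENNReal.ofReal (εs n) := hA ▸ hj
  have hcover : A ∪ B ∪ C = Set.univ :=
    Set.eq_univ_of_forall fun ω => by
      rcases notStopped_or_hitUpperBy_or_hitLowerBy X (Ub μ X εs) (Lb μ X εs) (n - 1) ω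
        with h | h | h <;> simp [A, B, C, h]
  have : (1 : ℝ≥0∞) < 1 := calc
    (1 : ℝ≥0∞) = μ (A ∪ B ∪ C) := by rw [hcover, measure_univ]
    _ ≤ μ A + μ B + μ C := (measure_union_le _ _).trans (by gcongr; exact measure_union_le _ _)
    _ = (μ A + μ C) + μ B := by ring
    _ ≤ ENNReal.ofReal (εs n) + ENNReal.ofReal (εs (n - 1)) := add_le_add hj' hU
    _ = ENNReal.ofReal (εs n + εs (n - 1)) := (ENNReal.ofReal_add (hnn _) (hnn _)).symm
    _ < 1 := ENNReal.ofReal_lt_one.mpr (by linarith [hhalf n, hhalf (n - 1)])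
  exact lt_irrefl _ this

end Admissible

section Spending

variable {μ : Measure Ω} {X : ℕ → Ω → ℕ} {εs : ℕ → ℝ}

lemma measure_hitUpperBy_le_and_measure_hitLowerBy_le [IsProbabilityMeasure μ]
    (hX : ∀ i ω, X i ω ≤ 1) (hnn : ∀ n, 0 ≤ εs n) (hmono : Monotone εs)
    (hhalf : ∀ n, εs n < 1 / 2) {n : ℕ} (hn : 1 ≤ n) :
    μ {ω | hitUpperBy X (Ub μ X εs) (Lb μ X εs) n ω} ≤ ENNReal.ofReal (εs n) ∧
      μ {ω | hitLowerBy X (Ub μ X εs) (Lb μ X εs) n ω} ≤ ENNReal.ofReal (εs n) := by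
  induction n, hn using Nat.le_induction with
  | base =>
    have hU : ∀ ω, ¬hitUpperBy X (Ub μ X εs) (Lb μ X εs) 1 ω := by
      rintro ω ⟨k, hk1, hk, -, hkU⟩
      obtain rfl : k = 1 := by omega
      have := S_le hX 1 ω
      rw [Ub_one] at hkU
      omega
    have hL : ∀ ω, ¬hitLowerBy X (Ub μ X εs) (Lb μ X εs) 1 ω := by
      rintro ω ⟨k, hk1, hk, -, hkL⟩
      obtain rfl : k = 1 := by omega
      rw [Lb_one] at hkL
      omega
    simp [hU, hL]
  | succ n hn ih =>
    obtain ⟨hU, hL⟩ := ih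
    have hUmem := Int.csInf_mem (upperAdmissible_nonempty (n := n + 1) hX hmono hU)
      bddBelow_upperAdmissible
    have hLmem := Int.csSup_mem (lowerAdmissible_nonempty (n := n + 1) hmono hL)
      (bddAbove_lowerAdmissible hX hnn hhalf hU)
    rw [← Ub_eq_sInf (by omega)] at hUmem
    rw [← Lb_eq_sSup (by omega)] at hLmem
    constructor
    · exact (measure_mono fun ω => hitUpperBy_succ_iff.mp).trans
        ((measure_union_le _ _).trans hUmem.2)
    · exact (measure_mono fun ω => hitLowerBy_succ_iff.mp).trans
        ((measure_union_le _ _).trans hLmem)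

lemma Ub_le_of_measure_ge_le {n : ℕ} (hn : 2 ≤ n) {x : ℝ} (hx : 0 ≤ x)
    (h : μ {ω | x ≤ S X n ω} + μ {ω | hitUpperBy X (Ub μ X εs) (Lb μ X εs) (n - 1) ω} ≤
      ENNReal.ofReal (εs n)) :
    (Ub μ X εs n : ℝ) ≤ x + 1 := by
  have hmem : ⌊x⌋ + 1 ∈ upperAdmissible μ X εs n := by
    refine ⟨?_, le_trans (add_le_add (measure_mono (μ := μ) fun ω hω => ?_) le_rfl) h⟩
    · have := Int.floor_nonneg.mpr hx
      omega
    · have : (⌊x⌋ : ℝ) + 1 ≤ S X n ω := by exact_mod_cast hω.2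
      exact (Int.lt_floor_add_one x).le.trans this
  have hle : Ub μ X εs n ≤ ⌊x⌋ + 1 := by
    rw [Ub_eq_sInf hn]
    exact csInf_le bddBelow_upperAdmissible hmem
  calc (Ub μ X εs n : ℝ) ≤ ⌊x⌋ + 1 := by exact_mod_cast hle
    _ ≤ x + 1 := by linarith [Int.floor_le x]

lemma le_Lb_of_measure_le_le {n : ℕ} (hn : 2 ≤ n) (hbdd : BddAbove (lowerAdmissible μ X εs n))
    {y : ℝ}
    (h : μ {ω | S X n ω ≤ y} + μ {ω | hitLowerBy X (Ub μ X εs) (Lb μ X εs) (n - 1) ω} ≤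
      ENNReal.ofReal (εs n)) :
    y - 1 ≤ Lb μ X εs n := by
  have hmem : ⌈y⌉ - 1 ∈ lowerAdmissible μ X εs n := by
    refine le_trans (add_le_add (measure_mono (μ := μ) fun ω hω => ?_) le_rfl) h
    have : (S X n ω : ℝ) ≤ ⌈y⌉ - 1 := by exact_mod_cast hω.2
    show (S X n ω : ℝ) ≤ y
    linarith [Int.ceil_lt_add_one y]
  have hle : ⌈y⌉ - 1 ≤ Lb μ X εs n := by
    rw [Lb_eq_sSup hn]
    exact le_csSup hbdd hmem
  calc y - 1 ≤ ⌈y⌉ - 1 := by linarith [Int.le_ceil y]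
    _ ≤ Lb μ X εs n := by exact_mod_cast hle

end Spending

lemma exp_neg_two_mul_sq_div_eq {d n : ℝ} (hd : 0 < d) (hd1 : d ≤ 1) (hn : 0 < n) :
    exp (-(2 * √(-(n * log d) / 2) ^ 2) / n) = d := by
  have hlog : 0 ≤ -(n * log d) / 2 := by
    have := mul_nonpos_of_nonneg_of_nonpos hn.le (log_nonpos hd.le hd1)
    linarith
  rw [sq_sqrt hlog, show -(2 * (-(n * log d) / 2)) / n = log d by field_simp, exp_log hd]

theorem statement_10_general {Ω : Type*} [MeasurableSpace Ω]
    (α ε : ℝ) (hα : α ∈ Set.Ioo (0:ℝ) 1)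
    (εs : ℕ → ℝ) (hmono : Monotone εs)
    (hnonneg : ∀ n, 0 ≤ εs n) (hlt : ∀ n, εs n < ε)
    (P : ℝ → Measure Ω) (X : ℕ → Ω → ℕ)
    (hBern : ∀ p ∈ Set.Icc (0:ℝ) 1, IsBernoulliSeq (P p) p X)
    (hεhalf : ε < 1 / 2) (hstrict : ∀ n : ℕ, 2 ≤ n → εs (n - 1) < εs n) :
    ∀ n : ℕ, 2 ≤ n →
      ((Ub (P α) X εs n : ℝ) ≤
          n * α + Real.sqrt (-((n : ℝ) * Real.log (εs n - εs (n - 1))) / 2) + 1) ∧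
        (n * α - Real.sqrt (-((n : ℝ) * Real.log (εs n - εs (n - 1))) / 2) - 1 ≤
          (Lb (P α) X εs n : ℝ)) := by
  intro n hn
  have hB := hBern α (Set.Ioo_subset_Icc_self hα)
  have := hB.isProb
  have hhalf : ∀ n, εs n < 1 / 2 := fun n => (hlt n).trans hεhalf
  obtain ⟨hU, hL⟩ := measure_hitUpperBy_le_and_measure_hitLowerBy_le (μ := P α) hB.bdd hnonneg
    hmono hhalf (n := n - 1) (by omega)
  set d := εs n - εs (n - 1)
  set Δ := √(-(n * log d) / 2)
  have hd : 0 < d := sub_pos.mpr (hstrict n hn)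
  have htail : ENNReal.ofReal (exp (-(2 * Δ ^ 2) / n)) + ENNReal.ofReal (εs (n - 1)) =
      ENNReal.ofReal (εs n) := by
    rw [exp_neg_two_mul_sq_div_eq hd (by linarith [hhalf n, hnonneg (n - 1)]) (by positivity),
      ← ENNReal.ofReal_add hd.le (hnonneg _), sub_add_cancel]
  constructor
  · refine Ub_le_of_measure_ge_le hn (by have := hα.1; positivity) ?_
    exact htail ▸ add_le_add (hB.measure_ge_le hα.1.le n (sqrt_nonneg _)) hU
  · refine le_Lb_of_measure_le_le hn (bddAbove_lowerAdmissible hB.bdd hnonneg hhalf hU) ?_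
    exact htail ▸ add_le_add (hB.measure_le_le hα.1.le n (sqrt_nonneg _)) hL

theorem statement_10 {Ω : Type*} [MeasurableSpace Ω]
    (α ε : ℝ) (hα : α ∈ Set.Ioo (0:ℝ) 1) (hε : ε ∈ Set.Ioo (0:ℝ) 1)
    (εs : ℕ → ℝ) (hεs0 : εs 0 = 0) (hmono : Monotone εs)
    (hnonneg : ∀ n, 0 ≤ εs n) (hlt : ∀ n, εs n < ε)
    (hlim : Filter.Tendsto εs Filter.atTop (nhds ε))
    (P : ℝ → Measure Ω) (X : ℕ → Ω → ℕ)
    (hBern : ∀ p ∈ Set.Icc (0:ℝ) 1, IsBernoulliSeq (P p) p X)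
    (hεhalf : ε < 1 / 2) (hstrict : ∀ n : ℕ, 2 ≤ n → εs (n - 1) < εs n) :
    ∀ n : ℕ, 2 ≤ n →
      ((Ub (P α) X εs n : ℝ) ≤
          n * α + Real.sqrt (-((n : ℝ) * Real.log (εs n - εs (n - 1))) / 2) + 1) ∧
        (n * α - Real.sqrt (-((n : ℝ) * Real.log (εs n - εs (n - 1))) / 2) - 1 ≤
          (Lb (P α) X εs n : ℝ)) :=
  statement_10_general α ε hα εs hmono hnonneg hlt P X hBern hεhalf hstrict

end SeqMC
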